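/- Let f_1, ..., f_M : ℝ^d → ℝ with f_m(x) = E_{z∼D_m}[f_m(x,z)], each f_m(·,z) almost surely L-smooth and μ-strongly convex (μ ≥ 0), let f = (1/M) Σ_m f_m with minimizer x_*, and let M ≥ 2. Let x^1, ..., x^M ∈ ℝ^d with average x̂ and V = (1/M) Σ_m ‖x^m - x̂‖², let g = (1/M) Σ_m ∇f_m(x^m, z_m) with z_1, ..., z_M independent, z_m ∼ D_m, and let γ ≥ 0. Then E‖x̂ - γg - x_*‖² ≤ (1 - γμ)‖x̂ - x_*‖² + γL(1 + 2γL)V - 2γ(1 - 4γL)D_f(x̂, x_*) + 4γ²σ_dif²/M; in particular, if γ ≤ 1/(8L) then E‖x̂ - γg - x_*‖² ≤ (1 - γμ)‖x̂ - x_*‖² + (5/4)γL·V - (γ/2)D_f(x̂, x_*) + 4γ²σ_dif²/M. Here D_f(x,y) = f(x) - f(y) - ⟨∇f(y), x - y⟩ and σ_dif² = (1/M) Σ_m E_{z_m∼D_m}‖∇f_m(x_*, z_m)‖². -/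

import Mathlib

/-!
Expanding the square, `E‖x̂ - γ g - x⋆‖² = ‖x̂ - x⋆‖² - 2γ ⟪x̂ - x⋆, E g⟫ + γ² E‖g‖²`. The inner
product is bounded below by applying smoothness at `x̂` and strong convexity at `x⋆` around each
`xᵐ` and averaging; Jensen turns the `μ`-term into `‖x̂ - x⋆‖²`. For the second moment, `g` is
split into the gradient increments from `xᵐ` to `x̂`, from `x̂` to `x⋆`, and the gradient noise at
`x⋆`. Lipschitz gradients bound the first by `L² V`, co-coercivity bounds the second by
`2L D_f(x̂, x⋆)`, and the third is an average of `M` independent centred vectors (`∇f(x⋆) = 0`), so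
its second moment is at most `σ_dif² / M`; they combine through
`‖a + b + c‖² ≤ 2‖a‖² + 4‖b‖² + 4‖c‖²`.
-/

open MeasureTheory ProbabilityTheory Finset
open scoped InnerProductSpace

/-- `f : ℝ^d → ℝ` is `L`-smooth and `μ`-strongly convex (`μ = 0` meaning merely convex),
witnessed by the gradient map `df`:
`(μ/2)‖x - y‖² ≤ f x - f y - ⟪df y, x - y⟫ ≤ (L/2)‖x - y‖²` for all `x, y`. -/
def SmoothSC {d : ℕ} (L μ : ℝ) (f : EuclideanSpace ℝ (Fin d) → ℝ)
    (df : EuclideanSpace ℝ (Fin d) → EuclideanSpace ℝ (Fin d)) : Prop :=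
  ∀ x y : EuclideanSpace ℝ (Fin d),
    μ / 2 * ‖x - y‖ ^ 2 ≤ f x - f y - ⟪df y, x - y⟫_ℝ ∧
    f x - f y - ⟪df y, x - y⟫_ℝ ≤ L / 2 * ‖x - y‖ ^ 2

/-- The Bregman divergence `D_f(x, y) = f x - f y - ⟪∇f y, x - y⟫` of `f`,
with gradient map `df`. -/
noncomputable def Breg {d : ℕ} (f : EuclideanSpace ℝ (Fin d) → ℝ)
    (df : EuclideanSpace ℝ (Fin d) → EuclideanSpace ℝ (Fin d))
    (x y : EuclideanSpace ℝ (Fin d)) : ℝ :=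
  f x - f y - ⟪df y, x - y⟫_ℝ


section Bregman

variable {d : ℕ} {L μ : ℝ} {f : EuclideanSpace ℝ (Fin d) → ℝ}
  {df : EuclideanSpace ℝ (Fin d) → EuclideanSpace ℝ (Fin d)}

theorem breg_eq_breg_add_breg_add_inner (x y w : EuclideanSpace ℝ (Fin d)) :
    Breg f df x w = Breg f df x y + Breg f df y w + ⟪df y - df w, x - y⟫_ℝ := by
  simp only [Breg, inner_sub_left, inner_sub_right]
  ring

theorem smoothSC_iff_breg : SmoothSC L μ f df ↔
    ∀ x y, μ / 2 * ‖x - y‖ ^ 2 ≤ Breg f df x y ∧ Breg f df x y ≤ L / 2 * ‖x - y‖ ^ 2 :=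
  Iff.rfl

namespace SmoothSC

theorem le_breg (h : SmoothSC L μ f df) (x y : EuclideanSpace ℝ (Fin d)) :
    μ / 2 * ‖x - y‖ ^ 2 ≤ Breg f df x y :=
  (h x y).1

theorem breg_le (h : SmoothSC L μ f df) (x y : EuclideanSpace ℝ (Fin d)) :
    Breg f df x y ≤ L / 2 * ‖x - y‖ ^ 2 :=
  (h x y).2

theorem sub_le_inner_add (h : SmoothSC L μ f df) (a b c : EuclideanSpace ℝ (Fin d)) :
    f a - f b ≤ ⟪df c, a - b⟫_ℝ + L / 2 * ‖c - a‖ ^ 2 - μ / 2 * ‖c - b‖ ^ 2 := by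
  have hac := h.breg_le a c
  have hbc := h.le_breg b c
  have hsplit : ⟪df c, a - b⟫_ℝ = ⟪df c, a - c⟫_ℝ - ⟪df c, b - c⟫_ℝ := by
    rw [← inner_sub_right, sub_sub_sub_cancel_right]
  rw [norm_sub_rev c a, norm_sub_rev c b]
  simp only [Breg] at hac hbc
  linarith

/-- Co-coercivity: compare both bounds at the point `x - L⁻¹ (df x - df y)`. -/
theorem norm_sub_sq_le_two_mul_breg (h : SmoothSC L μ f df) (hL : 0 < L) (hμ : 0 ≤ μ)
    (x y : EuclideanSpace ℝ (Fin d)) :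
    ‖df x - df y‖ ^ 2 ≤ 2 * L * Breg f df x y := by
  set u := df x - df y
  have hsplit := breg_eq_breg_add_breg_add_inner (f := f) (df := df) (x - L⁻¹ • u) x y
  have hlow : 0 ≤ Breg f df (x - L⁻¹ • u) y :=
    le_trans (by positivity) (h.le_breg _ y)
  have hup := h.breg_le (x - L⁻¹ • u) x
  rw [sub_sub_cancel_left, inner_neg_right, real_inner_smul_right,
    real_inner_self_eq_norm_sq] at hsplit
  rw [sub_sub_cancel_left, norm_neg, norm_smul, Real.norm_eq_abs, abs_inv, abs_of_pos hL,
    mul_pow] at hup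
  have : L⁻¹ * ‖u‖ ^ 2 ≤ 2 * Breg f df x y := by
    have hLL : L / 2 * (L⁻¹ ^ 2 * ‖u‖ ^ 2) = L⁻¹ / 2 * ‖u‖ ^ 2 := by field_simp
    linarith
  rwa [inv_mul_le_iff₀ hL, ← mul_assoc, mul_comm L 2] at this

theorem norm_sub_sq_le (h : SmoothSC L μ f df) (hL : 0 < L) (hμ : 0 ≤ μ)
    (x y : EuclideanSpace ℝ (Fin d)) :
    ‖df x - df y‖ ^ 2 ≤ L ^ 2 * ‖x - y‖ ^ 2 :=
  calc ‖df x - df y‖ ^ 2 ≤ 2 * L * Breg f df x y := h.norm_sub_sq_le_two_mul_breg hL hμ x y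
    _ ≤ 2 * L * (L / 2 * ‖x - y‖ ^ 2) := by gcongr; exact h.breg_le x y
    _ = L ^ 2 * ‖x - y‖ ^ 2 := by ring

theorem grad_eq_zero_of_forall_le (h : SmoothSC L μ f df) (hL : 0 < L)
    {c : EuclideanSpace ℝ (Fin d)} (hc : ∀ y, f c ≤ f y) : df c = 0 := by
  have hup := h.breg_le (c - L⁻¹ • df c) c
  have hmin := hc (c - L⁻¹ • df c)
  simp only [Breg, sub_sub_cancel_left, norm_neg, norm_smul, inner_neg_right,
    real_inner_smul_right, real_inner_self_eq_norm_sq, Real.norm_eq_abs, abs_inv,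
    abs_of_pos hL, mul_pow] at hup
  have hLL : L / 2 * (L⁻¹ ^ 2 * ‖df c‖ ^ 2) = L⁻¹ / 2 * ‖df c‖ ^ 2 := by field_simp
  have hnorm : ‖df c‖ ^ 2 ≤ 0 :=
    nonpos_of_mul_nonpos_right (by linarith) (by positivity : 0 < L⁻¹ / 2)
  exact norm_eq_zero.1 (pow_eq_zero_iff two_ne_zero |>.1 (le_antisymm hnorm (sq_nonneg _)))

end SmoothSC

end Bregman

section Averaging

variable {d : ℕ} {L μ : ℝ}

theorem breg_avg {M : ℕ} (f : Fin M → EuclideanSpace ℝ (Fin d) → ℝ)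
    (df : Fin M → EuclideanSpace ℝ (Fin d) → EuclideanSpace ℝ (Fin d))
    (x y : EuclideanSpace ℝ (Fin d)) :
    Breg (fun x => (M : ℝ)⁻¹ * ∑ m, f m x) (fun x => (M : ℝ)⁻¹ • ∑ m, df m x) x y =
      (M : ℝ)⁻¹ * ∑ m, Breg (f m) (df m) x y := by
  simp only [Breg, real_inner_smul_left, sum_inner, sum_sub_distrib]
  ring

theorem SmoothSC.avg {M : ℕ} (hM : 0 < M) {f : Fin M → EuclideanSpace ℝ (Fin d) → ℝ}
    {df : Fin M → EuclideanSpace ℝ (Fin d) → EuclideanSpace ℝ (Fin d)}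
    (h : ∀ m, SmoothSC L μ (f m) (df m)) :
    SmoothSC L μ (fun x => (M : ℝ)⁻¹ * ∑ m, f m x) (fun x => (M : ℝ)⁻¹ • ∑ m, df m x) := by
  refine smoothSC_iff_breg.2 fun x y => ?_
  have hconst : ∀ a : ℝ, (M : ℝ)⁻¹ * ∑ _m : Fin M, a = a := fun a => by
    rw [sum_const, card_univ, Fintype.card_fin, nsmul_eq_mul, ← mul_assoc,
      inv_mul_cancel₀ (by positivity), one_mul]
  rw [breg_avg]
  constructor
  · calc μ / 2 * ‖x - y‖ ^ 2 = (M : ℝ)⁻¹ * ∑ _m : Fin M, μ / 2 * ‖x - y‖ ^ 2 := (hconst _).symm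
      _ ≤ _ := by gcongr with m; exact (h m).le_breg x y
  · calc _ ≤ (M : ℝ)⁻¹ * ∑ _m : Fin M, L / 2 * ‖x - y‖ ^ 2 := by
          gcongr with m; exact (h m).breg_le x y
      _ = L / 2 * ‖x - y‖ ^ 2 := hconst _

theorem sub_avg_le_inner_avg_grad {M : ℕ} {f : Fin M → EuclideanSpace ℝ (Fin d) → ℝ}
    {df : Fin M → EuclideanSpace ℝ (Fin d) → EuclideanSpace ℝ (Fin d)}
    (h : ∀ m, SmoothSC L μ (f m) (df m)) (x : Fin M → EuclideanSpace ℝ (Fin d))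
    (a b : EuclideanSpace ℝ (Fin d)) :
    (M : ℝ)⁻¹ * ∑ m, f m a - (M : ℝ)⁻¹ * ∑ m, f m b ≤
      ⟪a - b, (M : ℝ)⁻¹ • ∑ m, df m (x m)⟫_ℝ + L / 2 * ((M : ℝ)⁻¹ * ∑ m, ‖x m - a‖ ^ 2) -
        μ / 2 * ((M : ℝ)⁻¹ * ∑ m, ‖x m - b‖ ^ 2) := by
  have hsum := sum_le_sum fun m (_ : m ∈ univ) => (h m).sub_le_inner_add a b (x m)
  simp only [sum_sub_distrib, sum_add_distrib, ← mul_sum] at hsum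
  rw [real_inner_smul_right, real_inner_comm, sum_inner]
  linear_combination mul_le_mul_of_nonneg_left hsum (by positivity : (0 : ℝ) ≤ (M : ℝ)⁻¹)

end Averaging

section Integral

variable {d : ℕ} {L μ : ℝ} {Z : Type*} [MeasurableSpace Z] {ν : Measure Z}
  {F : EuclideanSpace ℝ (Fin d) → Z → ℝ}
  {dF : EuclideanSpace ℝ (Fin d) → Z → EuclideanSpace ℝ (Fin d)}

theorem integrable_breg (hF : ∀ x, Integrable (F x) ν) (hdF : ∀ x, Integrable (dF x) ν)
    (x y : EuclideanSpace ℝ (Fin d)) :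
    Integrable (fun w => Breg (F · w) (dF · w) x y) ν :=
  ((hF x).sub (hF y)).sub ((hdF y).inner_const _)

theorem integral_breg (hF : ∀ x, Integrable (F x) ν) (hdF : ∀ x, Integrable (dF x) ν)
    (x y : EuclideanSpace ℝ (Fin d)) :
    ∫ w, Breg (F · w) (dF · w) x y ∂ν =
      Breg (fun x => ∫ w, F x w ∂ν) (fun x => ∫ w, dF x w ∂ν) x y := by
  simp only [Breg]
  have hFxy : Integrable (fun w => F x w - F y w) ν := (hF x).sub (hF y)
  rw [integral_sub hFxy ((hdF y).inner_const _), integral_sub (hF x) (hF y)]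
  simp_rw [real_inner_comm (x - y)]
  rw [integral_inner (hdF y)]

variable [IsProbabilityMeasure ν]

theorem SmoothSC.integral (h : ∀ᵐ w ∂ν, SmoothSC L μ (F · w) (dF · w))
    (hF : ∀ x, Integrable (F x) ν) (hdF : ∀ x, Integrable (dF x) ν) :
    SmoothSC L μ (fun x => ∫ w, F x w ∂ν) (fun x => ∫ w, dF x w ∂ν) := by
  refine smoothSC_iff_breg.2 fun x y => ?_
  rw [← integral_breg hF hdF]
  constructor
  · calc μ / 2 * ‖x - y‖ ^ 2 = ∫ _, μ / 2 * ‖x - y‖ ^ 2 ∂ν := by simp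
      _ ≤ _ := integral_mono_ae (integrable_const _) (integrable_breg hF hdF x y)
          (h.mono fun w hw => hw.le_breg x y)
  · calc _ ≤ ∫ _, L / 2 * ‖x - y‖ ^ 2 ∂ν :=
          integral_mono_ae (integrable_breg hF hdF x y) (integrable_const _)
            (h.mono fun w hw => hw.breg_le x y)
      _ = L / 2 * ‖x - y‖ ^ 2 := by simp

theorem integral_norm_sub_sq_le_of_ae_smoothSC (hsm : ∀ᵐ w ∂ν, SmoothSC L μ (F · w) (dF · w))
    (hL : 0 < L) (hμ : 0 ≤ μ) (hdF : ∀ x, MemLp (dF x) 2 ν) (x y : EuclideanSpace ℝ (Fin d)) :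
    ∫ w, ‖dF x w - dF y w‖ ^ 2 ∂ν ≤ L ^ 2 * ‖x - y‖ ^ 2 :=
  calc ∫ w, ‖dF x w - dF y w‖ ^ 2 ∂ν ≤ ∫ _, L ^ 2 * ‖x - y‖ ^ 2 ∂ν :=
        integral_mono_ae (((hdF x).sub (hdF y)).integrable_norm_pow two_ne_zero)
          (integrable_const _) (hsm.mono fun w hw => hw.norm_sub_sq_le hL hμ x y)
    _ = L ^ 2 * ‖x - y‖ ^ 2 := by simp

theorem integral_norm_sub_sq_le_two_mul_breg_of_ae_smoothSC
    (hsm : ∀ᵐ w ∂ν, SmoothSC L μ (F · w) (dF · w)) (hL : 0 < L) (hμ : 0 ≤ μ)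
    (hF : ∀ x, Integrable (F x) ν) (hdF : ∀ x, MemLp (dF x) 2 ν) (x y : EuclideanSpace ℝ (Fin d)) :
    ∫ w, ‖dF x w - dF y w‖ ^ 2 ∂ν ≤
      2 * L * Breg (fun x => ∫ w, F x w ∂ν) (fun x => ∫ w, dF x w ∂ν) x y := by
  have hdF₁ : ∀ x, Integrable (dF x) ν := fun x => (hdF x).integrable one_le_two
  rw [← integral_breg hF hdF₁, ← integral_const_mul]
  exact integral_mono_ae (((hdF x).sub (hdF y)).integrable_norm_pow two_ne_zero)
    ((integrable_breg hF hdF₁ x y).const_mul _)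
    (hsm.mono fun w hw => hw.norm_sub_sq_le_two_mul_breg hL hμ x y)

end Integral

section Moments

variable {Ω E : Type*} [MeasurableSpace Ω] {P : Measure Ω}

theorem norm_avg_sq_le [SeminormedAddCommGroup E] [NormedSpace ℝ E] {M : ℕ} (v : Fin M → E) :
    ‖(M : ℝ)⁻¹ • ∑ m, v m‖ ^ 2 ≤ (M : ℝ)⁻¹ * ∑ m, ‖v m‖ ^ 2 := by
  have hJensen := sum_div_card_sq_le_sum_sq_div_card (s := univ) (f := fun m => ‖v m‖)
  simp only [card_univ, Fintype.card_fin] at hJensen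
  calc ‖(M : ℝ)⁻¹ • ∑ m, v m‖ ^ 2 ≤ ((∑ m, ‖v m‖) / M) ^ 2 := by
        rw [norm_smul, norm_inv, RCLike.norm_natCast, inv_mul_eq_div]
        gcongr
        exact norm_sum_le _ _
    _ ≤ (M : ℝ)⁻¹ * ∑ m, ‖v m‖ ^ 2 := by rwa [inv_mul_eq_div]

theorem norm_avg_sub_sq_le [SeminormedAddCommGroup E] [NormedSpace ℝ E] {M : ℕ} (hM : 0 < M)
    (x : Fin M → E) (c : E) :
    ‖(M : ℝ)⁻¹ • ∑ m, x m - c‖ ^ 2 ≤ (M : ℝ)⁻¹ * ∑ m, ‖x m - c‖ ^ 2 := by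
  have hc : (M : ℝ)⁻¹ • ∑ m, x m - c = (M : ℝ)⁻¹ • ∑ m, (x m - c) := by
    rw [sum_sub_distrib, sum_const, card_univ, Fintype.card_fin, smul_sub,
      ← Nat.cast_smul_eq_nsmul ℝ, smul_smul, inv_mul_cancel₀ (by positivity), one_smul]
  rw [hc]
  exact norm_avg_sq_le _

theorem integral_norm_add_sq_le [NormedAddCommGroup E] [NormedSpace ℝ E] {X Y : Ω → E}
    (hX : MemLp X 2 P) (hY : MemLp Y 2 P) :
    ∫ ω, ‖X ω + Y ω‖ ^ 2 ∂P ≤ 2 * ∫ ω, ‖X ω‖ ^ 2 ∂P + 2 * ∫ ω, ‖Y ω‖ ^ 2 ∂P := by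
  have hX2 := hX.integrable_norm_pow two_ne_zero
  have hY2 := hY.integrable_norm_pow two_ne_zero
  rw [← integral_const_mul, ← integral_const_mul,
    ← integral_add (hX2.const_mul 2) (hY2.const_mul 2)]
  refine integral_mono ((hX.add hY).integrable_norm_pow two_ne_zero)
    ((hX2.const_mul 2).add (hY2.const_mul 2)) fun ω => ?_
  calc ‖X ω + Y ω‖ ^ 2 ≤ (‖X ω‖ + ‖Y ω‖) ^ 2 := by gcongr; exact norm_add_le _ _
    _ ≤ 2 * ‖X ω‖ ^ 2 + 2 * ‖Y ω‖ ^ 2 := by linarith [add_sq_le (a := ‖X ω‖) (b := ‖Y ω‖)]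

variable [NormedAddCommGroup E] [InnerProductSpace ℝ E] [CompleteSpace E]

theorem integral_norm_sub_smul_sq [IsProbabilityMeasure P] {Y : Ω → E} (hY : MemLp Y 2 P)
    (a : E) (γ : ℝ) :
    ∫ ω, ‖a - γ • Y ω‖ ^ 2 ∂P =
      ‖a‖ ^ 2 - 2 * γ * ⟪a, ∫ ω, Y ω ∂P⟫_ℝ + γ ^ 2 * ∫ ω, ‖Y ω‖ ^ 2 ∂P := by
  have hY1 := hY.integrable one_le_two
  have hinner : Integrable (fun ω => 2 * γ * ⟪a, Y ω⟫_ℝ) P := (hY1.const_inner a).const_mul _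
  have hlin : Integrable (fun ω => ‖a‖ ^ 2 - 2 * γ * ⟪a, Y ω⟫_ℝ) P :=
    (integrable_const _).sub hinner
  simp_rw [norm_sub_sq_real, real_inner_smul_right, norm_smul, mul_pow, Real.norm_eq_abs, sq_abs,
    ← mul_assoc]
  rw [integral_add hlin ((hY.integrable_norm_pow two_ne_zero).const_mul _),
    integral_sub (integrable_const _) hinner, integral_const_mul, integral_const_mul,
    integral_inner hY1]
  simp

variable [MeasurableSpace E] [BorelSpace E]

theorem ProbabilityTheory.IndepFun.integral_inner {X Y : Ω → E} (hXY : IndepFun X Y P)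
    (hX : Integrable X P) (hY : Integrable Y P) :
    ∫ ω, ⟪X ω, Y ω⟫_ℝ ∂P = ⟪∫ ω, X ω ∂P, ∫ ω, Y ω ∂P⟫_ℝ :=
  hXY.integral_bilin hX hY (innerSL ℝ)

theorem integral_norm_sum_sq_of_indepFun [IsFiniteMeasure P] {ι : Type*} [Fintype ι]
    {Y : ι → Ω → E} (hY : ∀ i, MemLp (Y i) 2 P)
    (hind : Pairwise fun i j => IndepFun (Y i) (Y j) P) :
    ∫ ω, ‖∑ i, Y i ω‖ ^ 2 ∂P =
      ‖∑ i, ∫ ω, Y i ω ∂P‖ ^ 2 + ∑ i, (∫ ω, ‖Y i ω‖ ^ 2 ∂P - ‖∫ ω, Y i ω ∂P‖ ^ 2) := by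
  classical
  have hint : ∀ i j, Integrable (fun ω => ⟪Y i ω, Y j ω⟫_ℝ) P := by
    intro i j
    rcases eq_or_ne i j with rfl | hij
    · simpa only [real_inner_self_eq_norm_sq] using (hY i).integrable_norm_pow two_ne_zero
    · exact (hind hij).integrable_bilin ((hY i).integrable one_le_two)
        ((hY j).integrable one_le_two) (innerSL ℝ)
  have hpair : ∀ i j, ∫ ω, ⟪Y i ω, Y j ω⟫_ℝ ∂P = ⟪∫ ω, Y i ω ∂P, ∫ ω, Y j ω ∂P⟫_ℝ +
      if i = j then ∫ ω, ‖Y i ω‖ ^ 2 ∂P - ‖∫ ω, Y i ω ∂P‖ ^ 2 else 0 := by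
    intro i j
    rcases eq_or_ne i j with rfl | hij
    · rw [if_pos rfl]
      simp_rw [real_inner_self_eq_norm_sq]
      ring
    · rw [(hind hij).integral_inner ((hY i).integrable one_le_two) ((hY j).integrable one_le_two),
        if_neg hij, add_zero]
  have hexpand : ∀ v : ι → E, ‖∑ i, v i‖ ^ 2 = ∑ i, ∑ j, ⟪v i, v j⟫_ℝ := fun v => by
    simp_rw [← real_inner_self_eq_norm_sq, sum_inner, inner_sum]
  simp only [hexpand]
  rw [integral_finsetSum _ fun i _ => integrable_finsetSum _ fun j _ => hint i j]
  simp_rw [integral_finsetSum _ fun j _ => hint _ j, hpair, sum_add_distrib, sum_ite_eq,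
    if_pos (mem_univ _)]

end Moments

section Sampling

variable {Ω Z E : Type*} [MeasurableSpace Ω] [MeasurableSpace Z] {P : Measure Ω}
  [NormedAddCommGroup E] [NormedSpace ℝ E] {M : ℕ} {D : Fin M → Measure Z}
  {z : Fin M → Ω → Z}

theorem MeasureTheory.MeasurePreserving.integral_comp_of_aestronglyMeasurable {ν : Measure Z}
    {ζ : Ω → Z} (hζ : MeasurePreserving ζ P ν) {φ : Z → E} (hφ : AEStronglyMeasurable φ ν) :
    ∫ ω, φ (ζ ω) ∂P = ∫ w, φ w ∂ν := by
  rw [← hζ.map_eq] at hφ ⊢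
  exact (integral_map hζ.aemeasurable hφ).symm

theorem memLp_avg_comp (hz : ∀ m, MeasurePreserving (z m) P (D m)) {φ : Fin M → Z → E}
    (hφ : ∀ m, MemLp (φ m) 2 (D m)) :
    MemLp (fun ω => (M : ℝ)⁻¹ • ∑ m, φ m (z m ω)) 2 P :=
  (memLp_finsetSum _ fun m _ => (hφ m).comp_measurePreserving (hz m)).const_smul _

theorem integral_avg_comp (hz : ∀ m, MeasurePreserving (z m) P (D m))
    {φ : Fin M → Z → E} (hφ : ∀ m, Integrable (φ m) (D m)) :
    ∫ ω, (M : ℝ)⁻¹ • ∑ m, φ m (z m ω) ∂P = (M : ℝ)⁻¹ • ∑ m, ∫ w, φ m w ∂(D m) := by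
  have hφz : ∀ m, Integrable (fun ω => φ m (z m ω)) P := fun m =>
    (hz m).integrable_comp_of_integrable (hφ m)
  rw [integral_smul, integral_finsetSum _ fun m _ => hφz m]
  congr 1
  exact sum_congr rfl fun m _ => (hz m).integral_comp_of_aestronglyMeasurable (hφ m).1

theorem integral_norm_avg_comp_sq_le (hz : ∀ m, MeasurePreserving (z m) P (D m))
    {φ : Fin M → Z → E} (hφ : ∀ m, MemLp (φ m) 2 (D m)) :
    ∫ ω, ‖(M : ℝ)⁻¹ • ∑ m, φ m (z m ω)‖ ^ 2 ∂P ≤ (M : ℝ)⁻¹ * ∑ m, ∫ w, ‖φ m w‖ ^ 2 ∂(D m) := by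
  have hφz : ∀ m, Integrable (fun ω => ‖φ m (z m ω)‖ ^ 2) P := fun m =>
    ((hφ m).comp_measurePreserving (hz m)).integrable_norm_pow two_ne_zero
  calc ∫ ω, ‖(M : ℝ)⁻¹ • ∑ m, φ m (z m ω)‖ ^ 2 ∂P
      ≤ ∫ ω, (M : ℝ)⁻¹ * ∑ m, ‖φ m (z m ω)‖ ^ 2 ∂P :=
        integral_mono ((memLp_avg_comp hz hφ).integrable_norm_pow two_ne_zero)
          ((integrable_finsetSum _ fun m _ => hφz m).const_mul _) fun ω => norm_avg_sq_le _
    _ = (M : ℝ)⁻¹ * ∑ m, ∫ w, ‖φ m w‖ ^ 2 ∂(D m) := by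
        rw [integral_const_mul, integral_finsetSum _ fun m _ => hφz m]
        congr 1
        exact sum_congr rfl fun m _ =>
          (hz m).integral_comp_of_aestronglyMeasurable ((hφ m).1.norm.pow 2)

theorem integral_norm_avg_comp_sq_le_of_iIndepFun [IsFiniteMeasure P] {H : Type*}
    [NormedAddCommGroup H] [InnerProductSpace ℝ H] [CompleteSpace H] [MeasurableSpace H]
    [BorelSpace H] (hz : ∀ m, MeasurePreserving (z m) P (D m))
    (hind : iIndepFun z P) {φ : Fin M → Z → H} (hφ : ∀ m, MemLp (φ m) 2 (D m))
    (hmean : ∑ m, ∫ w, φ m w ∂(D m) = 0) :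
    ∫ ω, ‖(M : ℝ)⁻¹ • ∑ m, φ m (z m ω)‖ ^ 2 ∂P ≤
      ((M : ℝ)⁻¹ * ∑ m, ∫ w, ‖φ m w‖ ^ 2 ∂(D m)) / M := by
  have hφz : ∀ m, MemLp (fun ω => φ m (z m ω)) 2 P := fun m =>
    (hφ m).comp_measurePreserving (hz m)
  have hpair : Pairwise fun m k => IndepFun (fun ω => φ m (z m ω)) (fun ω => φ k (z k ω)) P :=
    fun m k hmk => (hind.indepFun hmk).comp₀ (hz m).aemeasurable (hz k).aemeasurable
      ((hz m).map_eq ▸ (hφ m).1.aemeasurable) ((hz k).map_eq ▸ (hφ k).1.aemeasurable)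
  have hsq : ∀ m, ∫ ω, ‖φ m (z m ω)‖ ^ 2 ∂P = ∫ w, ‖φ m w‖ ^ 2 ∂(D m) := fun m =>
    (hz m).integral_comp_of_aestronglyMeasurable (φ := fun w => ‖φ m w‖ ^ 2) ((hφ m).1.norm.pow 2)
  have hmoment := integral_norm_sum_sq_of_indepFun hφz hpair
  simp only [fun m => (hz m).integral_comp_of_aestronglyMeasurable (hφ m).1, hmean, hsq,
    norm_zero] at hmoment
  simp_rw [norm_smul, mul_pow, norm_inv, RCLike.norm_natCast]
  rw [integral_const_mul, hmoment]
  calc (M : ℝ)⁻¹ ^ 2 * (0 ^ 2 + ∑ m, (∫ w, ‖φ m w‖ ^ 2 ∂(D m) - ‖∫ w, φ m w ∂(D m)‖ ^ 2))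
      ≤ (M : ℝ)⁻¹ ^ 2 * ∑ m, ∫ w, ‖φ m w‖ ^ 2 ∂(D m) := by
        gcongr
        rw [zero_pow two_ne_zero, zero_add]
        exact sum_le_sum fun m _ => sub_le_self _ (sq_nonneg _)
    _ = ((M : ℝ)⁻¹ * ∑ m, ∫ w, ‖φ m w‖ ^ 2 ∂(D m)) / M := by ring

end Sampling

section StochasticGradient

variable {d M : ℕ} {L μ : ℝ} {Z Ω : Type*} [MeasurableSpace Z] [MeasurableSpace Ω]
  {P : Measure Ω} {D : Fin M → Measure Z} {F : Fin M → EuclideanSpace ℝ (Fin d) → Z → ℝ}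
  {dF : Fin M → EuclideanSpace ℝ (Fin d) → Z → EuclideanSpace ℝ (Fin d)} {z : Fin M → Ω → Z}

theorem integral_norm_avg_grad_sq_le [IsFiniteMeasure P] (hL : 0 < L) (hμ : 0 ≤ μ)
    (hD : ∀ m, IsProbabilityMeasure (D m))
    (hsm : ∀ m, ∀ᵐ w ∂(D m), SmoothSC L μ (F m · w) (dF m · w))
    (hF : ∀ m x, Integrable (F m x) (D m)) (hdF : ∀ m x, MemLp (dF m x) 2 (D m))
    (hz : ∀ m, MeasurePreserving (z m) P (D m)) (hind : iIndepFun z P)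
    (x : Fin M → EuclideanSpace ℝ (Fin d)) (y c : EuclideanSpace ℝ (Fin d))
    (hc : ∑ m, ∫ w, dF m c w ∂(D m) = 0) :
    ∫ ω, ‖(M : ℝ)⁻¹ • ∑ m, dF m (x m) (z m ω)‖ ^ 2 ∂P ≤
      2 * L ^ 2 * ((M : ℝ)⁻¹ * ∑ m, ‖x m - y‖ ^ 2) +
        8 * L * ((M : ℝ)⁻¹ * ∑ m,
          Breg (fun x => ∫ w, F m x w ∂(D m)) (fun x => ∫ w, dF m x w ∂(D m)) y c) +
        4 * (((M : ℝ)⁻¹ * ∑ m, ∫ w, ‖dF m c w‖ ^ 2 ∂(D m)) / M) := by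
  have hA : ∀ m, MemLp (fun w => dF m (x m) w - dF m y w) 2 (D m) := fun m =>
    (hdF m _).sub (hdF m _)
  have hB : ∀ m, MemLp (fun w => dF m y w - dF m c w) 2 (D m) := fun m =>
    (hdF m _).sub (hdF m _)
  set a := fun ω => (M : ℝ)⁻¹ • ∑ m, (dF m (x m) (z m ω) - dF m y (z m ω))
  set b := fun ω => (M : ℝ)⁻¹ • ∑ m, (dF m y (z m ω) - dF m c (z m ω))
  set e := fun ω => (M : ℝ)⁻¹ • ∑ m, dF m c (z m ω)
  have hsplit : ∀ ω, (M : ℝ)⁻¹ • ∑ m, dF m (x m) (z m ω) = a ω + (b ω + e ω) := fun ω => by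
    simp only [a, b, e, ← smul_add, ← sum_add_distrib, sub_add_cancel]
  have ha : ∫ ω, ‖a ω‖ ^ 2 ∂P ≤ L ^ 2 * ((M : ℝ)⁻¹ * ∑ m, ‖x m - y‖ ^ 2) := by
    refine (integral_norm_avg_comp_sq_le hz hA).trans ?_
    conv_rhs => rw [mul_left_comm, mul_sum]
    gcongr with m
    have := hD m
    exact integral_norm_sub_sq_le_of_ae_smoothSC (hsm m) hL hμ (hdF m) _ _
  have hb : ∫ ω, ‖b ω‖ ^ 2 ∂P ≤ 2 * L * ((M : ℝ)⁻¹ * ∑ m,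
      Breg (fun x => ∫ w, F m x w ∂(D m)) (fun x => ∫ w, dF m x w ∂(D m)) y c) := by
    refine (integral_norm_avg_comp_sq_le hz hB).trans ?_
    conv_rhs => rw [mul_left_comm, mul_sum]
    gcongr with m
    have := hD m
    exact integral_norm_sub_sq_le_two_mul_breg_of_ae_smoothSC (hsm m) hL hμ (hF m) (hdF m) _ _
  have he := integral_norm_avg_comp_sq_le_of_iIndepFun hz hind (fun m => hdF m c) hc
  have ha₂ : MemLp a 2 P := memLp_avg_comp (φ := fun m w => dF m (x m) w - dF m y w) hz hA
  have hb₂ : MemLp b 2 P := memLp_avg_comp (φ := fun m w => dF m y w - dF m c w) hz hB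
  have he₂ : MemLp e 2 P := memLp_avg_comp hz fun m => hdF m c
  have hbe := integral_norm_add_sq_le hb₂ he₂
  simp only [hsplit]
  calc ∫ ω, ‖a ω + (b ω + e ω)‖ ^ 2 ∂P
      ≤ 2 * ∫ ω, ‖a ω‖ ^ 2 ∂P + 2 * ∫ ω, ‖b ω + e ω‖ ^ 2 ∂P :=
        integral_norm_add_sq_le ha₂ (hb₂.add he₂)
    _ ≤ _ := by linarith

theorem integral_norm_sgd_step_sub_sq_le [IsProbabilityMeasure P] (hM : 0 < M) (hL : 0 < L)
    (hμ : 0 ≤ μ) (hD : ∀ m, IsProbabilityMeasure (D m))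
    (hsm : ∀ m, ∀ᵐ w ∂(D m), SmoothSC L μ (F m · w) (dF m · w))
    (hF : ∀ m x, Integrable (F m x) (D m)) (hdF : ∀ m x, MemLp (dF m x) 2 (D m))
    (hz : ∀ m, MeasurePreserving (z m) P (D m)) (hind : iIndepFun z P)
    {x : Fin M → EuclideanSpace ℝ (Fin d)} {xhat : EuclideanSpace ℝ (Fin d)}
    (hxhat : xhat = (M : ℝ)⁻¹ • ∑ m, x m) {c : EuclideanSpace ℝ (Fin d)}
    (hc : ∑ m, ∫ w, dF m c w ∂(D m) = 0) {γ : ℝ} (hγ : 0 ≤ γ) :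
    ∫ ω, ‖xhat - γ • ((M : ℝ)⁻¹ • ∑ m, dF m (x m) (z m ω)) - c‖ ^ 2 ∂P ≤
      (1 - γ * μ) * ‖xhat - c‖ ^ 2 +
        γ * L * (1 + 2 * γ * L) * ((M : ℝ)⁻¹ * ∑ m, ‖x m - xhat‖ ^ 2) -
        2 * γ * (1 - 4 * γ * L) * Breg (fun x => (M : ℝ)⁻¹ * ∑ m, ∫ w, F m x w ∂(D m))
          (fun x => (M : ℝ)⁻¹ • ∑ m, ∫ w, dF m x w ∂(D m)) xhat c +
        4 * γ ^ 2 * ((M : ℝ)⁻¹ * ∑ m, ∫ w, ‖dF m c w‖ ^ 2 ∂(D m)) / M := by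
  have hsc : ∀ m, SmoothSC L μ (fun x => ∫ w, F m x w ∂(D m)) (fun x => ∫ w, dF m x w ∂(D m)) :=
    fun m => have := hD m; SmoothSC.integral (hsm m) (hF m) fun x => (hdF m x).integrable one_le_two
  have hbreg : Breg (fun x => (M : ℝ)⁻¹ * ∑ m, ∫ w, F m x w ∂(D m))
      (fun x => (M : ℝ)⁻¹ • ∑ m, ∫ w, dF m x w ∂(D m)) xhat c =
      (M : ℝ)⁻¹ * ∑ m, ∫ w, F m xhat w ∂(D m) - (M : ℝ)⁻¹ * ∑ m, ∫ w, F m c w ∂(D m) := by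
    rw [Breg, hc, smul_zero, inner_zero_left, sub_zero]
  have hinner := sub_avg_le_inner_avg_grad hsc x xhat c
  have hJensen := norm_avg_sub_sq_le hM x c
  rw [← hxhat] at hJensen
  have hmoment := integral_norm_avg_grad_sq_le hL hμ hD hsm hF hdF hz hind x xhat c hc
  rw [← breg_avg, hbreg] at hmoment
  have hmean : ∫ ω, (M : ℝ)⁻¹ • ∑ m, dF m (x m) (z m ω) ∂P =
      (M : ℝ)⁻¹ • ∑ m, ∫ w, dF m (x m) w ∂(D m) :=
    integral_avg_comp hz fun m => (hdF m (x m)).integrable one_le_two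
  simp_rw [sub_right_comm xhat _ c]
  rw [integral_norm_sub_smul_sq (memLp_avg_comp hz fun m => hdF m (x m)), hmean, hbreg]
  linear_combination mul_le_mul_of_nonneg_left hinner (by positivity : 0 ≤ 2 * γ) +
    mul_le_mul_of_nonneg_left hJensen (by positivity : 0 ≤ γ * μ) +
    mul_le_mul_of_nonneg_left hmoment (by positivity : 0 ≤ γ ^ 2)

end StochasticGradient

theorem optimality_gap_single_recursion_heterogeneous_general {d M : ℕ} (hM : 2 ≤ M) (L : ℝ) (hL : 0 < L) (μ : ℝ) (hμ : 0 ≤ μ)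
    {Z : Type*} [MeasurableSpace Z] {Ω : Type*} [MeasurableSpace Ω]
    (P : Measure Ω) [IsProbabilityMeasure P]
    (D : Fin M → Measure Z) (hD : ∀ m, IsProbabilityMeasure (D m))
    (FM : Fin M → EuclideanSpace ℝ (Fin d) → Z → ℝ) (dFM : Fin M → EuclideanSpace ℝ (Fin d) → Z → EuclideanSpace ℝ (Fin d))
    (fm : Fin M → EuclideanSpace ℝ (Fin d) → ℝ) (dfm : Fin M → EuclideanSpace ℝ (Fin d) → EuclideanSpace ℝ (Fin d))
    (hsmooth : ∀ m, ∀ᵐ z ∂(D m), SmoothSC L μ (fun x => FM m x z) (fun x => dFM m x z))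
    (hfm : ∀ m x, fm m x = ∫ z, FM m x z ∂(D m))
    (hdfm : ∀ m x, dfm m x = ∫ z, dFM m x z ∂(D m))
    (hdFjm : ∀ m, Measurable (fun p : EuclideanSpace ℝ (Fin d) × Z => dFM m p.1 p.2))
    (hFint : ∀ m x, Integrable (fun z => FM m x z) (D m))
    (hdFsq : ∀ m x, Integrable (fun z => ‖dFM m x z‖ ^ 2) (D m))
    (f : EuclideanSpace ℝ (Fin d) → ℝ) (df : EuclideanSpace ℝ (Fin d) → EuclideanSpace ℝ (Fin d))
    (hfdef : ∀ x, f x = (M : ℝ)⁻¹ * ∑ m, fm m x)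
    (hdfdef : ∀ x, df x = (M : ℝ)⁻¹ • ∑ m, dfm m x)
    (xstar : EuclideanSpace ℝ (Fin d)) (hmin : ∀ y, f xstar ≤ f y)
    (z : Fin M → Ω → Z) (hz : ∀ m, Measurable (z m))
    (hindep : iIndepFun z P)
    (hlaw : ∀ m, P.map (z m) = D m)
    (sdif2 : ℝ)
    (hsdif2 : sdif2 = (M : ℝ)⁻¹ * ∑ m, ∫ w, ‖dFM m xstar w‖ ^ 2 ∂(D m))
    (x : Fin M → EuclideanSpace ℝ (Fin d))
    (xhat : EuclideanSpace ℝ (Fin d)) (hxhat : xhat = (M : ℝ)⁻¹ • ∑ m, x m)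
    (Vdev : ℝ) (hV : Vdev = (M : ℝ)⁻¹ * ∑ m, ‖x m - xhat‖ ^ 2)
    (γ : ℝ) (hγ : 0 ≤ γ) :
    ((∫ ω, ‖xhat - γ • ((M : ℝ)⁻¹ • ∑ m, dFM m (x m) (z m ω)) - xstar‖ ^ 2 ∂P) ≤
      (1 - γ * μ) * ‖xhat - xstar‖ ^ 2 + γ * L * (1 + 2 * γ * L) * Vdev -
        2 * γ * (1 - 4 * γ * L) * Breg f df xhat xstar + 4 * γ ^ 2 * sdif2 / M) ∧
    (γ ≤ 1 / (8 * L) →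
      (∫ ω, ‖xhat - γ • ((M : ℝ)⁻¹ • ∑ m, dFM m (x m) (z m ω)) - xstar‖ ^ 2 ∂P) ≤
        (1 - γ * μ) * ‖xhat - xstar‖ ^ 2 + 5 / 4 * γ * L * Vdev -
          γ / 2 * Breg f df xhat xstar + 4 * γ ^ 2 * sdif2 / M) := by
  have hM₀ : 0 < M := by omega
  have hdF : ∀ m x, MemLp (dFM m x) 2 (D m) := fun m x =>
    (memLp_two_iff_integrable_sq_norm
      ((hdFjm m).comp measurable_prodMk_left).aestronglyMeasurable).2 (hdFsq m x)
  have hf : f = fun x => (M : ℝ)⁻¹ * ∑ m, ∫ w, FM m x w ∂(D m) :=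
    funext fun x => by simp only [hfdef, hfm]
  have hdf : df = fun x => (M : ℝ)⁻¹ • ∑ m, ∫ w, dFM m x w ∂(D m) :=
    funext fun x => by simp only [hdfdef, hdfm]
  have hfsc : SmoothSC L μ f df := hf ▸ hdf ▸ SmoothSC.avg hM₀ fun m =>
    have := hD m
    SmoothSC.integral (hsmooth m) (hFint m) fun x => (hdF m x).integrable one_le_two
  have hmean : ∑ m, ∫ w, dFM m xstar w ∂(D m) = 0 := by
    simpa [hdf, hM₀.ne'] using hfsc.grad_eq_zero_of_forall_le hL hmin
  have hstep := integral_norm_sgd_step_sub_sq_le hM₀ hL hμ hD hsmooth hFint hdF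
    (fun m => ⟨hz m, hlaw m⟩) hindep hxhat hmean hγ
  rw [← hf, ← hdf, ← hV, ← hsdif2] at hstep
  refine ⟨hstep, fun hγL => ?_⟩
  have hbreg₀ : 0 ≤ Breg f df xhat xstar := le_trans (by positivity) (hfsc.le_breg xhat xstar)
  have hV₀ : 0 ≤ Vdev := hV ▸ by positivity
  have hγL' : γ * L ≤ 1 / 8 := by
    rw [le_div_iff₀ (by positivity)] at hγL
    linarith
  linear_combination hstep +
    mul_nonneg (by linarith : 0 ≤ 1 / 4 - 2 * (γ * L)) (by positivity : 0 ≤ γ * L * Vdev) +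
    mul_nonneg (by linarith : 0 ≤ 3 / 2 - 8 * (γ * L))
      (by positivity : 0 ≤ γ * Breg f df xhat xstar)

/-- one-step recursion for the optimality gap, heterogeneous data. -/
theorem optimality_gap_single_recursion_heterogeneous {d M : ℕ} (hM : 2 ≤ M) (L : ℝ) (hL : 0 < L) (μ : ℝ) (hμ : 0 ≤ μ)
    {Z : Type*} [MeasurableSpace Z] {Ω : Type*} [MeasurableSpace Ω]
    (P : Measure Ω) [IsProbabilityMeasure P]
    (D : Fin M → Measure Z) (hD : ∀ m, IsProbabilityMeasure (D m))
    (FM : Fin M → EuclideanSpace ℝ (Fin d) → Z → ℝ) (dFM : Fin M → EuclideanSpace ℝ (Fin d) → Z → EuclideanSpace ℝ (Fin d))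
    (fm : Fin M → EuclideanSpace ℝ (Fin d) → ℝ) (dfm : Fin M → EuclideanSpace ℝ (Fin d) → EuclideanSpace ℝ (Fin d))
    (hsmooth : ∀ m, ∀ᵐ z ∂(D m), SmoothSC L μ (fun x => FM m x z) (fun x => dFM m x z))
    (hfm : ∀ m x, fm m x = ∫ z, FM m x z ∂(D m))
    (hdfm : ∀ m x, dfm m x = ∫ z, dFM m x z ∂(D m))
    (hFjm : ∀ m, Measurable (fun p : EuclideanSpace ℝ (Fin d) × Z => FM m p.1 p.2))
    (hdFjm : ∀ m, Measurable (fun p : EuclideanSpace ℝ (Fin d) × Z => dFM m p.1 p.2))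
    (hFint : ∀ m x, Integrable (fun z => FM m x z) (D m))
    (hdFsq : ∀ m x, Integrable (fun z => ‖dFM m x z‖ ^ 2) (D m))
    (f : EuclideanSpace ℝ (Fin d) → ℝ) (df : EuclideanSpace ℝ (Fin d) → EuclideanSpace ℝ (Fin d))
    (hfdef : ∀ x, f x = (M : ℝ)⁻¹ * ∑ m, fm m x)
    (hdfdef : ∀ x, df x = (M : ℝ)⁻¹ • ∑ m, dfm m x)
    (xstar : EuclideanSpace ℝ (Fin d)) (hmin : ∀ y, f xstar ≤ f y)
    (z : Fin M → Ω → Z) (hz : ∀ m, Measurable (z m))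
    (hindep : iIndepFun z P)
    (hlaw : ∀ m, P.map (z m) = D m)
    (sdif2 : ℝ)
    (hsdif2 : sdif2 = (M : ℝ)⁻¹ * ∑ m, ∫ w, ‖dFM m xstar w‖ ^ 2 ∂(D m))
    (x : Fin M → EuclideanSpace ℝ (Fin d))
    (xhat : EuclideanSpace ℝ (Fin d)) (hxhat : xhat = (M : ℝ)⁻¹ • ∑ m, x m)
    (Vdev : ℝ) (hV : Vdev = (M : ℝ)⁻¹ * ∑ m, ‖x m - xhat‖ ^ 2)
    (γ : ℝ) (hγ : 0 ≤ γ) :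
    ((∫ ω, ‖xhat - γ • ((M : ℝ)⁻¹ • ∑ m, dFM m (x m) (z m ω)) - xstar‖ ^ 2 ∂P) ≤
      (1 - γ * μ) * ‖xhat - xstar‖ ^ 2 + γ * L * (1 + 2 * γ * L) * Vdev -
        2 * γ * (1 - 4 * γ * L) * Breg f df xhat xstar + 4 * γ ^ 2 * sdif2 / M) ∧
    (γ ≤ 1 / (8 * L) →
      (∫ ω, ‖xhat - γ • ((M : ℝ)⁻¹ • ∑ m, dFM m (x m) (z m ω)) - xstar‖ ^ 2 ∂P) ≤
        (1 - γ * μ) * ‖xhat - xstar‖ ^ 2 + 5 / 4 * γ * L * Vdev -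
          γ / 2 * Breg f df xhat xstar + 4 * γ ^ 2 * sdif2 / M) :=
  optimality_gap_single_recursion_heterogeneous_general hM L hL μ hμ P D hD FM dFM fm dfm hsmooth
    hfm hdfm hdFjm hFint hdFsq f df hfdef hdfdef xstar hmin z hz hindep hlaw sdif2 hsdif2 x xhat
    hxhat Vdev hV γ hγ
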